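/- Let G be a connected graph and T, T' elimination trees of G with dist(T, T') ≤ k. Let C be the set of (T, T')-children-bad vertices and B = N_T^{2k}[C ∪ {root(T)}]. If T ≠ T', then the forest T[B] has at most k connected components that contain a vertex used by some fixed ℓ-rotation sequence (ℓ ≤ k) from T to T' using only vertices in B; moreover, every connected component Z of T[B] satisfies diam(Z) ≤ (3k+1)·4k. -/

import Mathlib

open Relation Set

/-- An elimination tree of a graph `G`: a rooted tree on the vertex set (given by a parent
function) such that every vertex reaches the root by iterating `parent`, and for every edge
of `G` one endpoint is an ancestor of the other. -/
structure ElimTree (V : Type) (G : SimpleGraph V) where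
  parent : V → Option V
  root : V
  root_parent : parent root = none
  reaches_root : ∀ v : V, Relation.ReflTransGen (fun a b => parent a = some b) v root
  hierarchy : ∀ x y : V, G.Adj x y →
    Relation.ReflTransGen (fun a b => parent a = some b) y x ∨
    Relation.ReflTransGen (fun a b => parent a = some b) x y

namespace ElimTree

variable {V : Type} {G : SimpleGraph V}

/-- `T.Anc x y` means `x` is an ancestor of `y` in `T` (including `x = y`). -/
def Anc (T : ElimTree V G) (x y : V) : Prop :=
  Relation.ReflTransGen (fun a b => T.parent a = some b) y x

/-- The set of children of `v` in `T`. -/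
def children (T : ElimTree V G) (v : V) : Set V := {w | T.parent w = some v}

/-- The vertex set of the subtree of `T` rooted at `v`. -/
def subtree (T : ElimTree V G) (v : V) : Set V := {x | T.Anc v x}

/-- `a b` is an edge of the tree `T`. -/
def IsEdge (T : ElimTree V G) (a b : V) : Prop :=
  T.parent b = some a ∨ T.parent a = some b

/-- The tree `T` viewed as an undirected simple graph. -/
def toGraph (T : ElimTree V G) : SimpleGraph V where
  Adj a b := a ≠ b ∧ T.IsEdge a b
  symm := ⟨fun a b h => ⟨h.1.symm, h.2.symm⟩⟩
  loopless := ⟨fun a h => h.1 rfl⟩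

/-- `T'` is obtained from `T` by rotating the edge `uv`, where `u = parent(T, v)`:
`v` takes `u`'s place, `u` becomes a child of `v`, children of `u` stay children of `u`,
and each child `w` of `v` becomes a child of `u` iff `u` has a `G`-neighbor in the subtree
of `T` rooted at `w`; all other vertices keep their parent. -/
def IsRot (T T' : ElimTree V G) (u v : V) : Prop :=
  T.parent v = some u ∧
  T'.parent u = some v ∧
  T'.parent v = T.parent u ∧
  (∀ w, w ≠ v → T.parent w = some u → T'.parent w = some u) ∧
  (∀ w, T.parent w = some v →
    (((∃ x ∈ T.subtree w, G.Adj u x) → T'.parent w = some u) ∧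
     ((¬ ∃ x ∈ T.subtree w, G.Adj u x) → T'.parent w = some v))) ∧
  (∀ s, s ≠ u → s ≠ v → T.parent s ≠ some u → T.parent s ≠ some v →
    T'.parent s = T.parent s)

/-- `(f, e)` is an `n`-rotation sequence from `T` to `T'`: `f i` are the intermediate
elimination trees and `e i` the rotated edges. -/
def RotSeq (T T' : ElimTree V G) (n : ℕ) (f : ℕ → ElimTree V G) (e : ℕ → V × V) : Prop :=
  f 0 = T ∧ f n = T' ∧ ∀ i < n, IsRot (f i) (f (i + 1)) (e i).1 (e i).2

/-- A vertex `x` is used by the rotation sequence with edges `e` of length `n`. -/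
def Uses (n : ℕ) (e : ℕ → V × V) (x : V) : Prop :=
  ∃ i < n, (e i).1 = x ∨ (e i).2 = x

/-- The rotation distance between two elimination trees. -/
noncomputable def rotDist (T T' : ElimTree V G) : ℕ :=
  sInf {n | ∃ f e, RotSeq T T' n f e}

/-- `v` is `(T, T')`-children-bad. -/
def ChildrenBad (T T' : ElimTree V G) (v : V) : Prop := T.children v ≠ T'.children v

/-- `v` is `(T, T')`-parent-bad. -/
def ParentBad (T T' : ElimTree V G) (v : V) : Prop := T.parent v ≠ T'.parent v

/-- `v` is `(T, T')`-bad. -/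
def Bad (T T' : ElimTree V G) (v : V) : Prop := ChildrenBad T T' v ∨ ParentBad T T' v

/-- The ball of radius `r` around the set `S` in the tree `T`. -/
def ball (T : ElimTree V G) (S : Set V) (r : ℕ) : Set V :=
  {x | ∃ s ∈ S, T.toGraph.dist s x ≤ r}

end ElimTree


section Aux

open SimpleGraph

variable {V : Type} {G : SimpleGraph V}

namespace ElimTree

lemma parent_ne_self (T : ElimTree V G) (x : V) : T.parent x ≠ some x := by
  intro h
  have key : ∀ z, Relation.ReflTransGen (fun a b => T.parent a = some b) x z → z = x := by
    intro z hz
    induction hz with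
    | refl => rfl
    | tail hab hbc ih =>
      rw [ih] at hbc
      rw [h] at hbc
      exact (Option.some_inj.mp hbc).symm
  have hroot : T.root = x := key _ (T.reaches_root x)
  have h2 := T.root_parent
  rw [hroot, h] at h2
  cases h2

lemma adj_of_parent {T : ElimTree V G} {x y : V} (h : T.parent x = some y) :
    T.toGraph.Adj x y := by
  refine ⟨fun hxy => ?_, Or.inr h⟩
  subst hxy
  exact parent_ne_self T x h

lemma toGraph_connected (T : ElimTree V G) : T.toGraph.Connected := by
  rw [SimpleGraph.connected_iff]
  refine ⟨fun u v => ?_, ⟨T.root⟩⟩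
  have reach : ∀ w, T.toGraph.Reachable w T.root := by
    intro w
    have h := T.reaches_root w
    induction h using Relation.ReflTransGen.head_induction_on with
    | refl => exact SimpleGraph.Reachable.refl _
    | head hac hcb ih => exact (adj_of_parent hac).reachable.trans ih
  exact (reach u).trans (reach v).symm

end ElimTree

lemma walk_induce {H : SimpleGraph V} {B : Set V} :
    ∀ {a b : V} (p : H.Walk a b), (∀ v ∈ p.support, v ∈ B) → ∀ (ha : a ∈ B) (hb : b ∈ B),
      ∃ q : (H.induce B).Walk ⟨a, ha⟩ ⟨b, hb⟩, q.length = p.length := by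
  intro a b p
  induction p with
  | nil => intro _ ha hb; exact ⟨SimpleGraph.Walk.nil, rfl⟩
  | cons hadj q ih =>
    rename_i a c b
    intro hsup ha hb
    have hc : c ∈ B := hsup c (by simp)
    obtain ⟨q', hq'⟩ := ih (fun v hv => hsup v (by simp [hv])) hc hb
    exact ⟨SimpleGraph.Walk.cons (by simpa [comap_adj] using hadj) q', by simp [hq']⟩

lemma exists_walk_in_ball [DecidableEq V] {H : SimpleGraph V} (hconn : H.Connected)
    {B : Set V} {s w : V} {r : ℕ}
    (hball : ∀ v, H.dist s v ≤ r → v ∈ B) (hd : H.dist s w ≤ r)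
    (hs : s ∈ B) (hw : w ∈ B) :
    ∃ q : (H.induce B).Walk ⟨w, hw⟩ ⟨s, hs⟩, q.length ≤ r := by
  obtain ⟨p, hp⟩ := (hconn s w).exists_walk_length_eq_dist
  have hsup : ∀ v ∈ p.support, v ∈ B := by
    intro v hv
    apply hball
    calc H.dist s v ≤ (p.takeUntil v hv).length := SimpleGraph.dist_le _
      _ ≤ p.length := SimpleGraph.Walk.length_takeUntil_le p hv
      _ = H.dist s w := hp
      _ ≤ r := hd
  obtain ⟨q, hq⟩ := walk_induce p hsup hs hw
  refine ⟨q.reverse, ?_⟩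
  rw [SimpleGraph.Walk.length_reverse, hq, hp]
  exact hd

def wtake {H : SimpleGraph V} : {a b : V} → (p : H.Walk a b) → (n : ℕ) → H.Walk a (p.getVert n)
  | _, _, p, 0 => SimpleGraph.Walk.nil.copy rfl (p.getVert_zero).symm
  | _, _, SimpleGraph.Walk.nil, _+1 => SimpleGraph.Walk.nil
  | _, _, SimpleGraph.Walk.cons h q, (n+1) =>
      ((wtake q n).cons h).copy rfl (SimpleGraph.Walk.getVert_cons_succ _ h).symm

lemma wtake_length_le {H : SimpleGraph V} :
    ∀ {a b : V} (p : H.Walk a b) (n : ℕ), (wtake p n).length ≤ n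
  | _, _, p, 0 => by simp [wtake]
  | _, _, SimpleGraph.Walk.nil, (n+1) => by simp [wtake]
  | _, _, SimpleGraph.Walk.cons h q, (n+1) => by
      simpa [wtake] using wtake_length_le q n

def wdrop {H : SimpleGraph V} : {a b : V} → (p : H.Walk a b) → (n : ℕ) → H.Walk (p.getVert n) b
  | _, _, p, 0 => p.copy (p.getVert_zero).symm rfl
  | _, _, SimpleGraph.Walk.nil, _+1 => SimpleGraph.Walk.nil
  | _, _, SimpleGraph.Walk.cons h q, (n+1) =>
      (wdrop q n).copy (SimpleGraph.Walk.getVert_cons_succ _ h).symm rfl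

lemma wdrop_length {H : SimpleGraph V} :
    ∀ {a b : V} (p : H.Walk a b) (n : ℕ), (wdrop p n).length = p.length - n
  | _, _, p, 0 => by simp [wdrop]
  | _, _, SimpleGraph.Walk.nil, (n+1) => by simp [wdrop]
  | _, _, SimpleGraph.Walk.cons h q, (n+1) => by
      simpa [wdrop] using wdrop_length q n

lemma walk_spread {H : SimpleGraph V} {x y : V} (W : H.Walk x y) (hW : W.length = H.dist x y)
    {t t' : ℕ} (htt : t ≤ t') (ht' : t' ≤ W.length) {r r' : V} (hrr : r = r')
    (q1 : H.Walk (W.getVert t) r) (q2 : H.Walk (W.getVert t') r') :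
    t' - t ≤ q1.length + q2.length := by
  subst hrr
  have hbig := SimpleGraph.dist_le
    ((wtake W t).append (q1.append (q2.reverse.append (wdrop W t'))))
  rw [← hW] at hbig
  simp only [SimpleGraph.Walk.length_append, SimpleGraph.Walk.length_reverse] at hbig
  have h1 := wtake_length_le W t
  have h2 := wdrop_length W t'
  omega

lemma card_le_of_spread (s : Finset ℕ) (d : ℕ)
    (h : ∀ a ∈ s, ∀ b ∈ s, a ≤ b → b - a ≤ d) : s.card ≤ d + 1 := by
  rcases s.eq_empty_or_nonempty with rfl | hne
  · simp
  · have hmin := s.min'_mem hne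
    have hsub : s ⊆ Finset.Icc (s.min' hne) (s.min' hne + d) := by
      intro b hb
      rw [Finset.mem_Icc]
      refine ⟨s.min'_le b hb, ?_⟩
      have := h _ hmin _ hb (s.min'_le b hb)
      omega
    calc s.card ≤ (Finset.Icc (s.min' hne) (s.min' hne + d)).card := Finset.card_le_card hsub
      _ = d + 1 := by rw [Nat.card_Icc]; omega

end Aux

section RotAux

open SimpleGraph ElimTree

variable {V : Type} {G : SimpleGraph V}

lemma rot_reach {T T' : ElimTree V G} {ℓ : ℕ} (f : ℕ → ElimTree V G) (e : ℕ → V × V)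
    (hσ : RotSeq T T' ℓ f e) (B : Set V)
    (hused : ∀ x : V, Uses ℓ e x → x ∈ B) :
    ∀ i, i ≤ ℓ → ∀ x y (hx : x ∈ B) (hy : y ∈ B), (f i).parent x = some y →
      (T.toGraph.induce B).Reachable ⟨x, hx⟩ ⟨y, hy⟩ := by
  intro i
  induction i with
  | zero =>
    intro _ x y hx hy hpar
    rw [hσ.1] at hpar
    exact (SimpleGraph.Adj.reachable (by simpa [comap_adj] using adj_of_parent hpar))
  | succ i ih =>
    intro hi x y hx hy hpar
    have hi' : i < ℓ := hi
    obtain ⟨h1, h2, h3, h4, h5, h6⟩ := hσ.2.2 i hi'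
    have hu : (e i).1 ∈ B := hused _ ⟨i, hi', Or.inl rfl⟩
    have hv : (e i).2 ∈ B := hused _ ⟨i, hi', Or.inr rfl⟩
    have hil : i ≤ ℓ := le_of_lt hi'
    have huv : (T.toGraph.induce B).Reachable ⟨(e i).2, hv⟩ ⟨(e i).1, hu⟩ :=
      ih hil _ _ hv hu h1
    by_cases hxu : x = (e i).1
    · subst hxu
      rw [h2] at hpar
      obtain rfl : (e i).2 = y := Option.some_inj.mp hpar
      exact huv.symm
    · by_cases hxv : x = (e i).2
      · subst hxv
        rw [h3] at hpar
        exact huv.trans (ih hil _ _ hu hy hpar)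
      · by_cases hpu : (f i).parent x = some (e i).1
        · rw [h4 x hxv hpu] at hpar
          obtain rfl : (e i).1 = y := Option.some_inj.mp hpar
          exact ih hil _ _ hx hy hpu
        · by_cases hpv : (f i).parent x = some (e i).2
          · have hxv' := ih hil _ _ hx hv hpv
            rcases Classical.em (∃ z ∈ (f i).subtree x, G.Adj (e i).1 z) with hc | hc
            · rw [(h5 x hpv).1 hc] at hpar
              obtain rfl : (e i).1 = y := Option.some_inj.mp hpar
              exact hxv'.trans huv
            · rw [(h5 x hpv).2 hc] at hpar
              obtain rfl : (e i).2 = y := Option.some_inj.mp hpar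
              exact hxv'
          · rw [h6 x hxu hxv hpu hpv] at hpar
            exact ih hil _ _ hx hy hpar

lemma children_eq_of_rot {T₁ T₂ : ElimTree V G} {u v : V} (h : IsRot T₁ T₂ u v)
    (z : V) (hzu : z ≠ u) (hzv : z ≠ v) (hzp : T₁.parent u ≠ some z) :
    T₁.children z = T₂.children z := by
  obtain ⟨h1, h2, h3, h4, h5, h6⟩ := h
  ext w
  simp only [ElimTree.children, Set.mem_setOf_eq]
  by_cases hwu : w = u
  · subst hwu
    rw [h2]
    constructor
    · intro hh; exact absurd hh hzp
    · intro hh; exact absurd (Option.some_inj.mp hh).symm hzv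
  · by_cases hwv : w = v
    · subst hwv
      rw [h1, h3]
      constructor
      · intro hh; exact absurd (Option.some_inj.mp hh).symm hzu
      · intro hh; exact absurd hh hzp
    · by_cases hpu : T₁.parent w = some u
      · rw [hpu, h4 w hwv hpu]
      · by_cases hpv : T₁.parent w = some v
        · rw [hpv]
          constructor
          · intro hh; exact absurd (Option.some_inj.mp hh).symm hzv
          · intro hh
            rcases Classical.em (∃ x ∈ T₁.subtree w, G.Adj u x) with hc | hc
            · rw [(h5 w hpv).1 hc] at hh
              exact absurd (Option.some_inj.mp hh).symm hzu
            · rw [(h5 w hpv).2 hc] at hh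
              exact absurd (Option.some_inj.mp hh).symm hzv
        · rw [h6 w hwu hwv hpu hpv]

lemma bad_triples {T T' : ElimTree V G} {ℓ : ℕ} {f : ℕ → ElimTree V G} {e : ℕ → V × V}
    (hσ : RotSeq T T' ℓ f e) {z : V} (hz : ChildrenBad T T' z) :
    ∃ i < ℓ, z = (e i).1 ∨ z = (e i).2 ∨ (f i).parent (e i).1 = some z := by
  by_contra hcon
  push_neg at hcon
  have key : ∀ i, i ≤ ℓ → T.children z = (f i).children z := by
    intro i
    induction i with
    | zero => intro _; rw [hσ.1]
    | succ i ih =>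
      intro hi
      have hi' : i < ℓ := hi
      obtain ⟨c1, c2, c3⟩ := hcon i hi'
      exact (ih (le_of_lt hi')).trans
        (children_eq_of_rot (hσ.2.2 i hi') z c1 c2 c3)
  apply hz
  rw [← hσ.2.1]
  exact key ℓ le_rfl

noncomputable def cvert (f : ℕ → ElimTree V G) (e : ℕ → V × V) (rt : V) (g : ℕ) : V :=
  if g = 0 then rt
  else if g = 1 then (e 0).1
  else if (g - 2) % 3 = 0 then (e ((g - 2) / 3 + 1)).1
  else if (g - 2) % 3 = 1 then (e ((g - 2) / 3 + 1)).2
  else ((f ((g - 2) / 3 + 1)).parent (e ((g - 2) / 3 + 1)).1).getD rt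

lemma cvert_decode (f : ℕ → ElimTree V G) (e : ℕ → V × V) (rt : V) {i j : ℕ}
    (hi : 1 ≤ i) (hj : j < 3) :
    cvert f e rt (3 * (i - 1) + j + 2) =
      (if j = 0 then (e i).1 else if j = 1 then (e i).2
        else ((f i).parent (e i).1).getD rt) := by
  have h2 : 3 * (i - 1) + j + 2 - 2 = 3 * (i - 1) + j := by omega
  unfold cvert
  rw [if_neg (by omega), if_neg (by omega), h2]
  have hmod : (3 * (i - 1) + j) % 3 = j := by omega
  have hdiv : (3 * (i - 1) + j) / 3 = i - 1 := by omega
  have hii : i - 1 + 1 = i := by omega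
  rw [hmod, hdiv, hii]

end RotAux

/-- with `B` the union of balls of radius `2k` around the children-bad
vertices and the root, for a rotation sequence of length `ℓ ≤ k` from `T ≠ T'` to `T'`
using only vertices of `B`, at most `k` connected components of `T[B]` contain a used
vertex, and every connected component of `T[B]` has diameter at most `(3k+1)·4k`. -/
theorem ball_components {V : Type} [Fintype V] [DecidableEq V] {G : SimpleGraph V}
    (hG : G.Connected) (T T' : ElimTree V G) (k ℓ : ℕ) (hk : ℓ ≤ k)
    (f : ℕ → ElimTree V G) (e : ℕ → V × V) (hσ : ElimTree.RotSeq T T' ℓ f e)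
    (hTT' : T ≠ T') (B : Set V)
    (hB : B = ElimTree.ball T ({v | ElimTree.ChildrenBad T T' v} ∪ {T.root}) (2 * k))
    (hused : ∀ x : V, ElimTree.Uses ℓ e x → x ∈ B) :
    {c : (T.toGraph.induce B).ConnectedComponent |
        ∃ x : B, ElimTree.Uses ℓ e x.1 ∧
          (T.toGraph.induce B).connectedComponentMk x = c}.ncard ≤ k ∧
    ∀ x y : B, (T.toGraph.induce B).Reachable x y →
      (T.toGraph.induce B).dist x y ≤ (3 * k + 1) * (4 * k) := by
  classical
  have hl1 : 1 ≤ ℓ := by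
    by_contra hcl
    apply hTT'
    have h0 : ℓ = 0 := by omega
    rw [← hσ.1, ← hσ.2.1, h0]
  have hk1 : 1 ≤ k := le_trans hl1 hk
  have hcenterB : ∀ s ∈ {v | ElimTree.ChildrenBad T T' v} ∪ {T.root}, s ∈ B := by
    intro s hs
    rw [hB]
    exact ⟨s, hs, by simp [SimpleGraph.dist_self]⟩
  have hreach := rot_reach f e hσ B hused
  constructor
  · -- PART 1: component count
    have hmem0 : (e 0).1 ∈ B := hused _ ⟨0, hl1, Or.inl rfl⟩
    set F : ℕ → (T.toGraph.induce B).ConnectedComponent := fun i =>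
      if h : i < ℓ then
        (T.toGraph.induce B).connectedComponentMk ⟨(e i).1, hused _ ⟨i, h, Or.inl rfl⟩⟩
      else (T.toGraph.induce B).connectedComponentMk ⟨(e 0).1, hmem0⟩ with hF
    have hsub : {c : (T.toGraph.induce B).ConnectedComponent |
        ∃ x : B, ElimTree.Uses ℓ e x.1 ∧
          (T.toGraph.induce B).connectedComponentMk x = c} ⊆ F '' (Set.Iio ℓ) := by
      rintro c ⟨x, hxuses, rfl⟩
      obtain ⟨i, hi, hcase⟩ := hxuses
      refine ⟨i, hi, ?_⟩
      have hFi : F i = (T.toGraph.induce B).connectedComponentMk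
          ⟨(e i).1, hused _ ⟨i, hi, Or.inl rfl⟩⟩ := by
        rw [hF]; exact dif_pos hi
      rw [hFi]
      rcases hcase with h1 | h2
      · exact congrArg _ (Subtype.ext h1)
      · have hr := hreach i (le_of_lt hi) (e i).2 (e i).1
          (hused _ ⟨i, hi, Or.inr rfl⟩) (hused _ ⟨i, hi, Or.inl rfl⟩) (hσ.2.2 i hi).1
        have h3 : (T.toGraph.induce B).connectedComponentMk
            ⟨(e i).2, hused _ ⟨i, hi, Or.inr rfl⟩⟩
            = (T.toGraph.induce B).connectedComponentMk x := congrArg _ (Subtype.ext h2)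
        rw [← h3]
        exact (SimpleGraph.ConnectedComponent.sound hr).symm
    calc {c : (T.toGraph.induce B).ConnectedComponent |
        ∃ x : B, ElimTree.Uses ℓ e x.1 ∧
          (T.toGraph.induce B).connectedComponentMk x = c}.ncard
        ≤ (F '' (Set.Iio ℓ)).ncard := Set.ncard_le_ncard hsub ((Set.finite_Iio ℓ).image F)
      _ ≤ (Set.Iio ℓ).ncard := Set.ncard_image_le (Set.finite_Iio ℓ)
      _ = ℓ := by rw [← Finset.coe_Iio, Set.ncard_coe_finset, Nat.card_Iio]
      _ ≤ k := hk
  · -- PART 2: diameter bound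
    intro x y hxy
    obtain ⟨W, hW⟩ := hxy.exists_walk_length_eq_dist
    rw [← hW]
    have hballB : ∀ s ∈ {v | ElimTree.ChildrenBad T T' v} ∪ {T.root},
        ∀ z, T.toGraph.dist s z ≤ 2 * k → z ∈ B := by
      intro s hs z hz; rw [hB]; exact ⟨s, hs, hz⟩
    have hassign : ∀ t : ℕ, ∃ g : ℕ, g < 3 * ℓ - 1 ∧ ∃ r : B,
        (∃ q : (T.toGraph.induce B).Walk (W.getVert t) r,
          q.length ≤ (if g = 1 then 2 * k + 1 else 2 * k)) ∧
        cvert f e T.root g = r.1 := by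
      intro t
      obtain ⟨s, hsC, hsd⟩ : ∃ s ∈ ({v | ElimTree.ChildrenBad T T' v} ∪ {T.root} : Set V),
          T.toGraph.dist s ((W.getVert t : V)) ≤ 2 * k := by
        have h := (W.getVert t).2
        revert h
        generalize ((W.getVert t : V)) = w
        intro h
        rw [hB] at h
        exact h
      have hsB : s ∈ B := hcenterB s hsC
      have hq0 : ∃ q : (T.toGraph.induce B).Walk (W.getVert t) ⟨s, hsB⟩,
          q.length ≤ 2 * k :=
        exists_walk_in_ball (ElimTree.toGraph_connected T) (hballB s hsC) hsd hsB
          (W.getVert t).2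
      rcases hsC with hbad | hroot
      · obtain ⟨i, hi, hcase⟩ := bad_triples hσ hbad
        by_cases hi0 : i = 0
        · subst hi0
          have hu0 : (e 0).1 ∈ B := hused _ ⟨0, hl1, Or.inl rfl⟩
          obtain ⟨q, hq⟩ := hq0
          have hgoal : ∃ q' : (T.toGraph.induce B).Walk (W.getVert t) ⟨(e 0).1, hu0⟩,
              q'.length ≤ 2 * k + 1 := by
            rcases hcase with hc | hc | hc
            · exact ⟨q.copy rfl (Subtype.ext hc), by
                rw [SimpleGraph.Walk.length_copy]; omega⟩
            · have hpar : T.parent (e 0).2 = some (e 0).1 := by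
                have h1 := (hσ.2.2 0 hl1).1
                rwa [hσ.1] at h1
              have hadj : (T.toGraph.induce B).Adj ⟨s, hsB⟩ ⟨(e 0).1, hu0⟩ := by
                have h2 : T.toGraph.Adj s (e 0).1 := by
                  rw [hc]; exact ElimTree.adj_of_parent hpar
                simpa [SimpleGraph.comap_adj] using h2
              exact ⟨q.append (SimpleGraph.Walk.cons hadj SimpleGraph.Walk.nil), by
                rw [SimpleGraph.Walk.length_append]; simp; omega⟩
            · have hpar : T.parent (e 0).1 = some s := by rwa [hσ.1] at hc
              have hadj : (T.toGraph.induce B).Adj ⟨s, hsB⟩ ⟨(e 0).1, hu0⟩ := by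
                have h2 : T.toGraph.Adj s (e 0).1 := (ElimTree.adj_of_parent hpar).symm
                simpa [SimpleGraph.comap_adj] using h2
              exact ⟨q.append (SimpleGraph.Walk.cons hadj SimpleGraph.Walk.nil), by
                rw [SimpleGraph.Walk.length_append]; simp; omega⟩
          obtain ⟨q', hq'⟩ := hgoal
          refine ⟨1, by omega, ⟨(e 0).1, hu0⟩, ⟨q', ?_⟩, by simp [cvert]⟩
          simpa using hq'
        · have hi1 : 1 ≤ i := by omega
          obtain ⟨q, hq⟩ := hq0
          rcases hcase with hc | hc | hc
          · refine ⟨3*(i-1)+0+2, by omega, ⟨s, hsB⟩, ⟨q, ?_⟩, ?_⟩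
            · rw [if_neg (by omega)]; exact hq
            · rw [cvert_decode f e T.root (i := i) (j := 0) hi1 (by omega)]
              simpa using hc.symm
          · refine ⟨3*(i-1)+1+2, by omega, ⟨s, hsB⟩, ⟨q, ?_⟩, ?_⟩
            · rw [if_neg (by omega)]; exact hq
            · rw [cvert_decode f e T.root (i := i) (j := 1) hi1 (by omega)]
              simpa using hc.symm
          · refine ⟨3*(i-1)+2+2, by omega, ⟨s, hsB⟩, ⟨q, ?_⟩, ?_⟩
            · rw [if_neg (by omega)]; exact hq
            · rw [cvert_decode f e T.root (i := i) (j := 2) hi1 (by omega)]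
              simp [hc]
      · have hs' : s = T.root := hroot
        obtain ⟨q, hq⟩ := hq0
        refine ⟨0, by omega, ⟨s, hsB⟩, ⟨q, ?_⟩, by simp [cvert, hs']⟩
        simpa using hq
    choose gfun hglt rep hrep hcv using hassign
    have hfib : ∀ b ∈ Finset.range (3*ℓ-1),
        (Finset.filter (fun a => gfun a = b) (Finset.range (W.length+1))).card
          ≤ 2 * (if b = 1 then 2*k+1 else 2*k) + 1 := by
      intro b _
      apply card_le_of_spread
      intro a ha c hcc hac
      simp only [Finset.mem_filter, Finset.mem_range] at ha hcc
      obtain ⟨q1, hq1⟩ := hrep a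
      obtain ⟨q2, hq2⟩ := hrep c
      have hrr : rep a = rep c := Subtype.ext (by rw [← hcv a, ← hcv c, ha.2, hcc.2])
      have hspread := walk_spread W hW hac (by omega : c ≤ W.length) hrr q1 q2
      rw [ha.2] at hq1
      rw [hcc.2] at hq2
      by_cases hb : b = 1 <;> simp [hb] at hq1 hq2 ⊢ <;> omega
    have hcount : W.length + 1 ≤ ∑ b ∈ Finset.range (3*ℓ-1),
        (2 * (if b = 1 then 2*k+1 else 2*k) + 1) := by
      have hmem : ∀ z ∈ Finset.range (W.length+1), gfun z ∈ Finset.range (3*ℓ-1) :=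
        fun z _ => Finset.mem_range.mpr (hglt z)
      have hc2 := Finset.card_eq_sum_card_fiberwise hmem
      rw [Finset.card_range] at hc2
      rw [hc2]
      exact Finset.sum_le_sum hfib
    have hsum : ∑ b ∈ Finset.range (3*ℓ-1), (2 * (if b = 1 then 2*k+1 else 2*k) + 1)
        = (3*ℓ-1) * (4*k+1) + 2 := by
      have h1 : ∀ b : ℕ, 2 * (if b = 1 then 2*k+1 else 2*k) + 1
          = (4*k+1) + (if b = 1 then 2 else 0) := by
        intro b; by_cases hb : b = 1 <;> simp [hb] <;> ring
      rw [Finset.sum_congr rfl (fun b _ => h1 b), Finset.sum_add_distrib, Finset.sum_const,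
        Finset.card_range, smul_eq_mul,
        Finset.sum_ite_eq' (Finset.range (3*ℓ-1)) 1 (fun _ => 2)]
      rw [if_pos (Finset.mem_range.mpr (by omega))]
    have hfin : W.length + 1 ≤ (3*ℓ-1) * (4*k+1) + 2 := by rw [← hsum]; exact hcount
    obtain ⟨j, rfl⟩ : ∃ j, k = j + 1 := ⟨k-1, by omega⟩
    have h5 : (3*ℓ-1) ≤ 3*j+2 := by omega
    have h6 : (3*ℓ-1) * (4*(j+1)+1) ≤ (3*j+2) * (4*(j+1)+1) :=
      Nat.mul_le_mul_right _ h5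
    have hQ : (3*j+2) * (4*(j+1)+1) + 1 ≤ (3*(j+1)+1) * (4*(j+1)) := by nlinarith
    linarith [hfin, h6, hQ]
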